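/- Combining the merge lemma with rank-one interlacing: let A, B be nondecreasing sequences with B_r ≤ A_{k₀} for some r, k₀ ≥ 1; let C be their nondecreasing merge; and let D be a nondecreasing sequence satisfying C_k ≤ D_k ≤ C_{k+1} for all k (rank-one gluing interlacing). Then D_{k+r−1} ≤ A_k for all k ≥ k₀. -/
import Mathlib


/-- `C` is the nondecreasing merge (counted with multiplicity) of the two sequences
`A` and `B`, all indexed by the positive integers. -/
def IsSortedMerge (A B C : ℕ → ℝ) : Prop :=
  (∀ k j, 1 ≤ k → k ≤ j → C k ≤ C j) ∧
  ∃ f g : ℕ → ℕ,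
    StrictMonoOn f {n : ℕ | 1 ≤ n} ∧ StrictMonoOn g {n : ℕ | 1 ≤ n} ∧
    (∀ k, 1 ≤ k → 1 ≤ f k ∧ 1 ≤ g k) ∧
    (f '' {n : ℕ | 1 ≤ n}) ∩ (g '' {n : ℕ | 1 ≤ n}) = ∅ ∧
    (f '' {n : ℕ | 1 ≤ n}) ∪ (g '' {n : ℕ | 1 ≤ n}) = {n : ℕ | 1 ≤ n} ∧
    (∀ k, 1 ≤ k → C (f k) = A k ∧ C (g k) = B k)

/-- Attaching a pendant graph lowers eigenvalues: if `B_r ≤ A_{k₀}`, `C` is the sorted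
merge of `A` and `B`, and `D` interlaces with `C` as `C_k ≤ D_k ≤ C_{k+1}` (rank-one
gluing), then `D_{k+r−1} ≤ A_k` for all `k ≥ k₀`. -/
theorem pendant_attachment_lowers_eigenvalues
    (A B C D : ℕ → ℝ)
    (hA : ∀ k j, 1 ≤ k → k ≤ j → A k ≤ A j)
    (hB : ∀ k j, 1 ≤ k → k ≤ j → B k ≤ B j)
    (hD : ∀ k j, 1 ≤ k → k ≤ j → D k ≤ D j)
    (hmerge : IsSortedMerge A B C)
    (hinter : ∀ k, 1 ≤ k → C k ≤ D k ∧ D k ≤ C (k + 1))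
    (r k₀ : ℕ) (hr : 1 ≤ r) (hk₀ : 1 ≤ k₀)
    (hBA : B r ≤ A k₀) :
    ∀ k, k₀ ≤ k → D (k + r - 1) ≤ A k := by
  obtain ⟨hC, f, g, hf, hg, hpos, hdisj, hun, hval⟩ := hmerge
  intro k hk
  have hk1 : 1 ≤ k := le_trans hk₀ hk
  -- The finite set of positions f(1..k) ∪ g(1..r)
  set S : Finset ℕ := (Finset.Icc 1 k).image f ∪ (Finset.Icc 1 r).image g with hS
  have hinjf : Set.InjOn f ↑(Finset.Icc 1 k) := by
    intro a ha b hb hab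
    simp only [Finset.coe_Icc, Set.mem_Icc] at ha hb
    exact hf.injOn ha.1 hb.1 hab
  have hinjg : Set.InjOn g ↑(Finset.Icc 1 r) := by
    intro a ha b hb hab
    simp only [Finset.coe_Icc, Set.mem_Icc] at ha hb
    exact hg.injOn ha.1 hb.1 hab
  have hdisj' : Disjoint ((Finset.Icc 1 k).image f) ((Finset.Icc 1 r).image g) := by
    rw [Finset.disjoint_left]
    rintro x hx hx'
    simp only [Finset.mem_image, Finset.mem_Icc] at hx hx'
    obtain ⟨a, ha, rfl⟩ := hx
    obtain ⟨b, hb, hfb⟩ := hx'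
    have : f a ∈ (f '' {n : ℕ | 1 ≤ n}) ∩ (g '' {n : ℕ | 1 ≤ n}) :=
      ⟨⟨a, ha.1, rfl⟩, ⟨b, hb.1, hfb⟩⟩
    rw [hdisj] at this
    exact this
  have hcard : S.card = k + r := by
    rw [hS, Finset.card_union_of_disjoint hdisj',
      Finset.card_image_of_injOn hinjf, Finset.card_image_of_injOn hinjg,
      Nat.card_Icc, Nat.card_Icc]
    omega
  -- S has an element ≥ k + r
  have hex : ∃ n ∈ S, k + r ≤ n := by
    by_contra h
    push_neg at h
    have hsub : S ⊆ Finset.Icc 1 (k + r - 1) := by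
      intro x hx
      have hlt := h x hx
      have hx1 : 1 ≤ x := by
        rw [hS] at hx
        simp only [Finset.mem_union, Finset.mem_image, Finset.mem_Icc] at hx
        rcases hx with ⟨a, ha, rfl⟩ | ⟨a, ha, rfl⟩
        · exact (hpos a ha.1).1
        · exact (hpos a ha.1).2
      simp only [Finset.mem_Icc]
      omega
    have := Finset.card_le_card hsub
    rw [hcard, Nat.card_Icc] at this
    omega
  obtain ⟨n, hn, hnkr⟩ := hex
  -- every element of S has C-value ≤ A k
  have hCn : C n ≤ A k := by
    rw [hS] at hn
    simp only [Finset.mem_union, Finset.mem_image, Finset.mem_Icc] at hn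
    rcases hn with ⟨a, ha, rfl⟩ | ⟨a, ha, rfl⟩
    · rw [(hval a ha.1).1]
      exact hA a k ha.1 ha.2
    · rw [(hval a ha.1).2]
      exact le_trans (hB a r ha.1 ha.2) (le_trans hBA (hA k₀ k hk₀ hk))
  have h1 : D (k + r - 1) ≤ C (k + r) := by
    have := (hinter (k + r - 1) (by omega)).2
    have heq : k + r - 1 + 1 = k + r := by omega
    rwa [heq] at this
  calc D (k + r - 1) ≤ C (k + r) := h1
    _ ≤ C n := hC (k + r) n (by omega) hnkr
    _ ≤ A k := hCn
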